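/- arXiv:2509.25553 — 2 statements merged into one kernel-verified Lean document; each statement's English description precedes it below -/
import Mathlib

section
/- Let c > 0, let λ : (0,∞) → ℝ be continuously differentiable with λ(u) > 0 for u > 0, let g be continuous, and let x be a twice continuously differentiable solution of 2λ(s+t)·x_st + λ'(s+t)·(x_s + x_t) = g(s,t) on an open neighborhood of Ω̄_c = {(s,t) : s ≥ 0, t ≥ 0, s+t ≥ c}, satisfying the homogeneous Goursat conditions x(s,0) = 0 for all s ≥ c and x(0,t) = 0 for all t ≥ c. Define the energy E(u) = ∫₀^u λ(u)·(x_s(s, u−s)² + x_t(s, u−s)²) ds for u ≥ c. Then for every u > c, E(u) = E(c) + ∫_c^u ∫₀^v ( g(s, v−s)·(x_s + x_t)(s, v−s) − 2λ'(v)·x_s(s, v−s)·x_t(s, v−s) ) ds dv. -/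
/-- Partial derivative with respect to the first variable. -/
noncomputable def pd1 (f : ℝ → ℝ → ℝ) (s t : ℝ) : ℝ := deriv (fun s' => f s' t) s

/-- Partial derivative with respect to the second variable. -/
noncomputable def pd2 (f : ℝ → ℝ → ℝ) (s t : ℝ) : ℝ := deriv (fun t' => f s t') t

/-!
Write `X = x_s`, `Y = x_t` and follow the line `Γ_v` through `(s, v - s)`. Using the equation and
`x_st = x_ts`, the source `g·(X + Y) - 2λ'XY` is `∂_v[λ(v)(X² + Y²)] + ∂_s[λ(v)Y²]`. Integrated
over `0 ≤ s ≤ v`, the second term leaves `λ(v)Y(v, 0)²`, because `Y(0, v) = 0`. Integrating the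
first over the trapezoid `0 ≤ s ≤ v, c ≤ v ≤ u` in the other order gives
`E(u) - E(c) - ∫_c^u λ(s)(X² + Y²)(s, 0) ds`, and `X(s, 0) = 0` makes the boundary terms cancel.
-/

open Set Topology MeasureTheory Function

section PartialDerivatives

variable {φ : ℝ → ℝ → ℝ} {V : Set (ℝ × ℝ)}

theorem hasDerivAt_pd1_fderiv {s t : ℝ}
    (h : DifferentiableAt ℝ (fun q : ℝ × ℝ => φ q.1 q.2) (s, t)) :
    HasDerivAt (fun s' => φ s' t) (fderiv ℝ (fun q : ℝ × ℝ => φ q.1 q.2) (s, t) (1, 0)) s :=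
  h.hasFDerivAt.comp_hasDerivAt (l := fun q : ℝ × ℝ => φ q.1 q.2) s
    ((hasDerivAt_id' s).prodMk (hasDerivAt_const s t))

theorem hasDerivAt_pd2_fderiv {s t : ℝ}
    (h : DifferentiableAt ℝ (fun q : ℝ × ℝ => φ q.1 q.2) (s, t)) :
    HasDerivAt (fun t' => φ s t') (fderiv ℝ (fun q : ℝ × ℝ => φ q.1 q.2) (s, t) (0, 1)) t :=
  h.hasFDerivAt.comp_hasDerivAt t ((hasDerivAt_const t s).prodMk (hasDerivAt_id t))

theorem pd1_eq_fderiv {s t : ℝ} (h : DifferentiableAt ℝ (fun q : ℝ × ℝ => φ q.1 q.2) (s, t)) :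
    pd1 φ s t = fderiv ℝ (fun q : ℝ × ℝ => φ q.1 q.2) (s, t) (1, 0) :=
  (hasDerivAt_pd1_fderiv h).deriv

theorem pd2_eq_fderiv {s t : ℝ} (h : DifferentiableAt ℝ (fun q : ℝ × ℝ => φ q.1 q.2) (s, t)) :
    pd2 φ s t = fderiv ℝ (fun q : ℝ × ℝ => φ q.1 q.2) (s, t) (0, 1) :=
  (hasDerivAt_pd2_fderiv h).deriv

theorem hasDerivAt_pd2 {s t : ℝ} (h : DifferentiableAt ℝ (fun q : ℝ × ℝ => φ q.1 q.2) (s, t)) :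
    HasDerivAt (fun t' => φ s t') (pd2 φ s t) t :=
  pd2_eq_fderiv h ▸ hasDerivAt_pd2_fderiv h

theorem hasDerivAt_along_antidiagonal {s v : ℝ}
    (h : DifferentiableAt ℝ (fun q : ℝ × ℝ => φ q.1 q.2) (s, v - s)) :
    HasDerivAt (fun s' => φ s' (v - s')) (pd1 φ s (v - s) - pd2 φ s (v - s)) s := by
  have hline : HasDerivAt (fun s' : ℝ => (s', v - s')) ((1 : ℝ), (-1 : ℝ)) s :=
    (hasDerivAt_id s).prodMk ((hasDerivAt_id s).const_sub v)
  have hdir : ((1 : ℝ), (-1 : ℝ)) = ((1 : ℝ), (0 : ℝ)) - (0, 1) := by simp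
  have hcomp := h.hasFDerivAt.comp_hasDerivAt s hline
  rwa [hdir, map_sub, ← pd1_eq_fderiv h, ← pd2_eq_fderiv h] at hcomp

theorem hasDerivAt_along_snd {s v : ℝ}
    (h : DifferentiableAt ℝ (fun q : ℝ × ℝ => φ q.1 q.2) (s, v - s)) :
    HasDerivAt (fun v' => φ s (v' - s)) (pd2 φ s (v - s)) v :=
  (hasDerivAt_pd2 h).comp_sub_const v s

theorem ContDiffOn.pd1 {n m : WithTop ℕ∞} (hφ : ContDiffOn ℝ n (fun q : ℝ × ℝ => φ q.1 q.2) V)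
    (hV : IsOpen V) (hmn : m + 1 ≤ n) :
    ContDiffOn ℝ m (fun q : ℝ × ℝ => pd1 φ q.1 q.2) V :=
  ((hφ.fderiv_of_isOpen hV hmn).clm_apply contDiffOn_const).congr fun _ hq =>
    pd1_eq_fderiv ((hφ.contDiffAt (hV.mem_nhds hq)).differentiableAt
      (one_pos.trans_le (le_add_self.trans hmn)).ne')

theorem ContDiffOn.pd2 {n m : WithTop ℕ∞} (hφ : ContDiffOn ℝ n (fun q : ℝ × ℝ => φ q.1 q.2) V)
    (hV : IsOpen V) (hmn : m + 1 ≤ n) :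
    ContDiffOn ℝ m (fun q : ℝ × ℝ => pd2 φ q.1 q.2) V :=
  ((hφ.fderiv_of_isOpen hV hmn).clm_apply contDiffOn_const).congr fun _ hq =>
    pd2_eq_fderiv ((hφ.contDiffAt (hV.mem_nhds hq)).differentiableAt
      (one_pos.trans_le (le_add_self.trans hmn)).ne')

theorem pd1_pd2_eq_pd2_pd1 (hφ : ContDiffOn ℝ 2 (fun q : ℝ × ℝ => φ q.1 q.2) V) (hV : IsOpen V)
    {s t : ℝ} (hst : (s, t) ∈ V) : pd1 (pd2 φ) s t = pd2 (pd1 φ) s t := by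
  set F := fderiv ℝ (fun q : ℝ × ℝ => φ q.1 q.2)
  have hnhds : V ∈ 𝓝 (s, t) := hV.mem_nhds hst
  have hF : DifferentiableAt ℝ F (s, t) :=
    ((hφ.fderiv_of_isOpen hV (m := 1) le_rfl).contDiffAt hnhds).differentiableAt one_ne_zero
  have hpartial {ψ : ℝ → ℝ → ℝ} (w : ℝ × ℝ)
      (hψ : ContDiffOn ℝ 1 (fun q : ℝ × ℝ => ψ q.1 q.2) V)
      (hψF : ∀ q ∈ V, ψ q.1 q.2 = F q w) (w' : ℝ × ℝ) :
      fderiv ℝ (fun q : ℝ × ℝ => ψ q.1 q.2) (s, t) w' = fderiv ℝ F (s, t) w' w := by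
    rw [(Filter.eventuallyEq_of_mem hnhds hψF).fderiv_eq,
      fderiv_clm_apply hF (differentiableAt_const w)]
    simp
  have hdiff {ψ : ℝ → ℝ → ℝ} (hψ : ContDiffOn ℝ 1 (fun q : ℝ × ℝ => ψ q.1 q.2) V) :
      DifferentiableAt ℝ (fun q : ℝ × ℝ => ψ q.1 q.2) (s, t) :=
    (hψ.contDiffAt hnhds).differentiableAt one_ne_zero
  have hX : ContDiffOn ℝ 1 (fun q : ℝ × ℝ => pd1 φ q.1 q.2) V := hφ.pd1 hV le_rfl
  have hY : ContDiffOn ℝ 1 (fun q : ℝ × ℝ => pd2 φ q.1 q.2) V := hφ.pd2 hV le_rfl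
  have hφd (q) (hq : q ∈ V) : DifferentiableAt ℝ (fun q : ℝ × ℝ => φ q.1 q.2) q :=
    (hφ.contDiffAt (hV.mem_nhds hq)).differentiableAt two_ne_zero
  rw [pd1_eq_fderiv (hdiff hY), pd2_eq_fderiv (hdiff hX),
    hpartial (0, 1) hY (fun q hq => pd2_eq_fderiv (hφd q hq)),
    hpartial (1, 0) hX (fun q hq => pd1_eq_fderiv (hφd q hq))]
  exact ((hφ.contDiffAt hnhds).isSymmSndFDerivAt (by simp)) _ _

end PartialDerivatives

theorem deriv_eq_zero_of_eqOn_Ici {f : ℝ → ℝ} {c v : ℝ} (h0 : EqOn f 0 (Ici c)) (hv : c ≤ v) :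
    deriv f v = 0 := by
  by_cases hf : DifferentiableAt ℝ f v
  · have hconst : HasDerivWithinAt f 0 (Ici c) v :=
      (hasDerivWithinAt_const v (Ici c) (0 : ℝ)).congr (fun y hy => h0 hy) (h0 hv)
    exact (uniqueDiffOn_Ici c v hv).eq_deriv _ hf.hasDerivAt.hasDerivWithinAt hconst
  · exact deriv_zero_of_not_differentiableAt hf

section Trapezoid

def trapezoid (a c u : ℝ) : Set (ℝ × ℝ) := (Icc a u ×ˢ Icc c u) ∩ {p | p.1 ≤ p.2}

variable {a c u : ℝ} {D W : ℝ → ℝ → ℝ}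

theorem isCompact_trapezoid : IsCompact (trapezoid a c u) :=
  (isCompact_Icc.prod isCompact_Icc).inter_right (isClosed_le continuous_fst continuous_snd)

theorem mem_trapezoid {s v : ℝ} :
    (s, v) ∈ trapezoid a c u ↔ a ≤ s ∧ s ≤ v ∧ c ≤ v ∧ v ≤ u := by
  simp only [trapezoid, mem_inter_iff, mem_prod, mem_Icc, mem_ofPred_eq]
  constructor
  · rintro ⟨⟨⟨h1, -⟩, h3, h4⟩, h5⟩; exact ⟨h1, h5, h3, h4⟩
  · rintro ⟨h1, h2, h3, h4⟩; exact ⟨⟨⟨h1, h2.trans h4⟩, h3, h4⟩, h2⟩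

theorem integrable_indicator_trapezoid (hD : ContinuousOn (uncurry D) (trapezoid a c u)) :
    Integrable ((trapezoid a c u).indicator (uncurry D)) :=
  (hD.integrableOn_compact isCompact_trapezoid).integrable_indicator
    isCompact_trapezoid.isClosed.measurableSet

theorem integral_indicator_trapezoid_left (hac : a ≤ c) (v : ℝ) :
    ∫ s, (trapezoid a c u).indicator (uncurry D) (s, v)
      = (Icc c u).indicator (fun v => ∫ s in a..v, D s v) v := by
  by_cases hv : v ∈ Icc c u
  · have hslice : (fun s => (trapezoid a c u).indicator (uncurry D) (s, v))
        = (Icc a v).indicator (fun s => D s v) := by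
      ext s
      simp only [indicator, mem_trapezoid, mem_Icc, uncurry_apply_pair]
      congr 1
      simp only [hv.1, hv.2, and_true]
    rw [indicator_of_mem hv, hslice, integral_indicator measurableSet_Icc,
      integral_Icc_eq_integral_Ioc, ← intervalIntegral.integral_of_le (hac.trans hv.1)]
  · have hslice : (fun s => (trapezoid a c u).indicator (uncurry D) (s, v)) = 0 := by
      ext s
      refine indicator_of_notMem (fun h => hv ?_) _
      obtain ⟨-, -, h3, h4⟩ := mem_trapezoid.1 h
      exact ⟨h3, h4⟩
    rw [indicator_of_notMem hv, hslice, Pi.zero_def, integral_zero]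

theorem integral_indicator_trapezoid_right (hcu : c ≤ u) (s : ℝ) :
    ∫ v, (trapezoid a c u).indicator (uncurry D) (s, v)
      = (Icc a u).indicator (fun s => ∫ v in max c s..u, D s v) s := by
  by_cases hs : s ∈ Icc a u
  · have hslice : (fun v => (trapezoid a c u).indicator (uncurry D) (s, v))
        = (Icc (max c s) u).indicator (fun v => D s v) := by
      ext v
      simp only [indicator, mem_trapezoid, mem_Icc, uncurry_apply_pair, max_le_iff]
      congr 1
      simp only [hs.1, true_and, eq_iff_iff]
      tauto
    rw [indicator_of_mem hs, hslice, integral_indicator measurableSet_Icc,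
      integral_Icc_eq_integral_Ioc, ← intervalIntegral.integral_of_le (max_le hcu hs.2)]
  · have hslice : (fun v => (trapezoid a c u).indicator (uncurry D) (s, v)) = 0 := by
      ext v
      refine indicator_of_notMem (fun h => hs ?_) _
      obtain ⟨h1, h2, -, h4⟩ := mem_trapezoid.1 h
      exact ⟨h1, h2.trans h4⟩
    rw [indicator_of_notMem hs, hslice, Pi.zero_def, integral_zero]

theorem integral_integral_trapezoid_swap (hac : a ≤ c) (hcu : c ≤ u)
    (hD : ContinuousOn (uncurry D) (trapezoid a c u)) :
    ∫ v in c..u, ∫ s in a..v, D s v = ∫ s in a..u, ∫ v in max c s..u, D s v := by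
  have hswap := integral_integral_swap (μ := volume) (ν := volume)
    (f := fun s v => (trapezoid a c u).indicator (uncurry D) (s, v))
    (integrable_indicator_trapezoid hD)
  simp only [integral_indicator_trapezoid_left hac, integral_indicator_trapezoid_right hcu,
    integral_indicator measurableSet_Icc, integral_Icc_eq_integral_Ioc] at hswap
  rw [intervalIntegral.integral_of_le hcu, intervalIntegral.integral_of_le (hac.trans hcu), hswap]

theorem intervalIntegrable_integral_trapezoid (hac : a ≤ c) (hcu : c ≤ u)
    (hD : ContinuousOn (uncurry D) (trapezoid a c u)) :
    IntervalIntegrable (fun v => ∫ s in a..v, D s v) volume c u := by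
  have h := (integrable_indicator_trapezoid hD).integral_prod_right (μ := volume) (ν := volume)
  simp only [integral_indicator_trapezoid_left hac] at h
  rw [intervalIntegrable_iff_integrableOn_Icc_of_le hcu]
  exact (integrable_indicator_iff measurableSet_Icc).1 h

theorem integral_integral_trapezoid_of_hasDerivAt (hac : a ≤ c) (hcu : c ≤ u)
    (hW : ∀ p ∈ trapezoid a c u, HasDerivAt (W p.1) (D p.1 p.2) p.2)
    (hWc : ContinuousOn (uncurry W) (trapezoid a c u))
    (hD : ContinuousOn (uncurry D) (trapezoid a c u)) :
    ∫ v in c..u, ∫ s in a..v, D s v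
      = (∫ s in a..u, W s u) - (∫ s in a..c, W s c) - ∫ s in c..u, W s s := by
  have hinner : ∀ s ∈ uIcc a u, ∫ v in max c s..u, D s v = W s u - W s (max c s) := by
    intro s hs
    rw [uIcc_of_le (hac.trans hcu)] at hs
    have hmem : ∀ v ∈ uIcc (max c s) u, (s, v) ∈ trapezoid a c u := by
      intro v hv
      rw [uIcc_of_le (max_le hcu hs.2), mem_Icc, max_le_iff] at hv
      exact mem_trapezoid.2 ⟨hs.1, hv.1.2, hv.1.1, hv.2⟩
    refine intervalIntegral.integral_eq_sub_of_hasDerivAt (fun v hv => hW _ (hmem v hv)) ?_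
    exact (hD.comp (Continuous.prodMk_right s).continuousOn hmem).intervalIntegrable
  have hmem_const : ∀ s ∈ uIcc a u, (s, u) ∈ trapezoid a c u := by
    intro s hs
    rw [uIcc_of_le (hac.trans hcu)] at hs
    exact mem_trapezoid.2 ⟨hs.1, hs.2, hcu, le_rfl⟩
  have hmem_max : ∀ s ∈ uIcc a u, (s, max c s) ∈ trapezoid a c u := by
    intro s hs
    rw [uIcc_of_le (hac.trans hcu)] at hs
    exact mem_trapezoid.2 ⟨hs.1, le_max_right c s, le_max_left c s, max_le hcu hs.2⟩
  have hint_max : IntervalIntegrable (fun s => W s (max c s)) volume a u :=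
    (hWc.comp (continuous_id.prodMk (continuous_const.max continuous_id)).continuousOn
      hmem_max).intervalIntegrable
  have hsplit : ∫ s in a..u, W s (max c s) = (∫ s in a..c, W s c) + ∫ s in c..u, W s s := by
    rw [← intervalIntegral.integral_add_adjacent_intervals
      (hint_max.mono_set (uIcc_subset_uIcc_left (mem_uIcc_of_le hac hcu)))
      (hint_max.mono_set (uIcc_subset_uIcc_right (mem_uIcc_of_le hac hcu)))]
    congr 1 <;> refine intervalIntegral.integral_congr fun s hs => ?_
    · rw [uIcc_of_le hac] at hs
      rw [max_eq_left hs.2]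
    · rw [uIcc_of_le hcu] at hs
      rw [max_eq_right hs.1]
  have hint_const : IntervalIntegrable (fun s => W s u) volume a u :=
    (hWc.comp (Continuous.prodMk_left u).continuousOn hmem_const).intervalIntegrable
  rw [integral_integral_trapezoid_swap hac hcu hD, intervalIntegral.integral_congr hinner,
    intervalIntegral.integral_sub hint_const hint_max, hsplit, sub_sub]

end Trapezoid

section Energy

variable {lam : ℝ → ℝ} {x : ℝ → ℝ → ℝ} {V S : Set (ℝ × ℝ)}

/-- The integrand of `E(v)` at the point `(s, v - s)` of `Γ_v`; the plane is parametrised by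
`(s, v)`, and `energyDensityDeriv` is the `v`-derivative. -/
noncomputable def energyDensity (lam : ℝ → ℝ) (x : ℝ → ℝ → ℝ) (s v : ℝ) : ℝ :=
  lam v * (pd1 x s (v - s) ^ 2 + pd2 x s (v - s) ^ 2)

noncomputable def energyDensityDeriv (lam : ℝ → ℝ) (x : ℝ → ℝ → ℝ) (s v : ℝ) : ℝ :=
  deriv lam v * (pd1 x s (v - s) ^ 2 + pd2 x s (v - s) ^ 2)
    + lam v * (2 * pd1 x s (v - s) * pd2 (pd1 x) s (v - s)
      + 2 * pd2 x s (v - s) * pd2 (pd2 x) s (v - s))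

theorem hasDerivAt_energyDensity {s v : ℝ} (hlam : DifferentiableAt ℝ lam v)
    (hx : ContDiffOn ℝ 2 (fun q : ℝ × ℝ => x q.1 q.2) V) (hV : IsOpen V) (hsv : (s, v - s) ∈ V) :
    HasDerivAt (energyDensity lam x s) (energyDensityDeriv lam x s v) v := by
  have hdiff {φ : ℝ → ℝ → ℝ} (hφ : ContDiffOn ℝ 1 (fun q : ℝ × ℝ => φ q.1 q.2) V) :
      DifferentiableAt ℝ (fun q : ℝ × ℝ => φ q.1 q.2) (s, v - s) :=
    (hφ.contDiffAt (hV.mem_nhds hsv)).differentiableAt one_ne_zero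
  have h := hlam.hasDerivAt.mul (((hasDerivAt_along_snd (hdiff (hx.pd1 hV le_rfl))).pow 2).add
    ((hasDerivAt_along_snd (hdiff (hx.pd2 hV le_rfl))).pow 2))
  refine h.congr_deriv ?_
  simp only [energyDensityDeriv, Pi.add_apply, Pi.pow_apply]
  ring

theorem ContinuousOn.comp_shear {F : ℝ → ℝ → ℝ}
    (hF : ContinuousOn (fun q : ℝ × ℝ => F q.1 q.2) V)
    (hS : MapsTo (fun p : ℝ × ℝ => (p.1, p.2 - p.1)) S V) :
    ContinuousOn (fun p : ℝ × ℝ => F p.1 (p.2 - p.1)) S :=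
  hF.comp (by fun_prop) hS

theorem continuousOn_energyDensity (hlam : Continuous lam)
    (hx : ContDiffOn ℝ 1 (fun q : ℝ × ℝ => x q.1 q.2) V) (hV : IsOpen V)
    (hS : MapsTo (fun p : ℝ × ℝ => (p.1, p.2 - p.1)) S V) :
    ContinuousOn (uncurry (energyDensity lam x)) S := by
  have hX := (hx.pd1 hV (m := 0) le_rfl).continuousOn.comp_shear hS
  have hY := (hx.pd2 hV (m := 0) le_rfl).continuousOn.comp_shear hS
  exact (hlam.comp continuous_snd).continuousOn.mul ((hX.pow 2).add (hY.pow 2))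

theorem continuousOn_energyDensityDeriv (hlam : ContDiff ℝ 1 lam)
    (hx : ContDiffOn ℝ 2 (fun q : ℝ × ℝ => x q.1 q.2) V) (hV : IsOpen V)
    (hS : MapsTo (fun p : ℝ × ℝ => (p.1, p.2 - p.1)) S V) :
    ContinuousOn (uncurry (energyDensityDeriv lam x)) S := by
  have hX₁ := hx.pd1 hV (m := 1) le_rfl
  have hY₁ := hx.pd2 hV (m := 1) le_rfl
  have hX := hX₁.continuousOn.comp_shear hS
  have hY := hY₁.continuousOn.comp_shear hS
  have hXt := (hX₁.pd2 hV (m := 0) le_rfl).continuousOn.comp_shear hS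
  have hYt := (hY₁.pd2 hV (m := 0) le_rfl).continuousOn.comp_shear hS
  have hlam' := (hlam.continuous_deriv le_rfl).comp (continuous_snd (X := ℝ) (Y := ℝ))
  have hlam₀ := hlam.continuous.comp (continuous_snd (X := ℝ) (Y := ℝ))
  exact (hlam'.continuousOn.mul ((hX.pow 2).add (hY.pow 2))).add
    (hlam₀.continuousOn.mul (((continuousOn_const.mul hX).mul hXt).add
      ((continuousOn_const.mul hY).mul hYt)))

theorem integral_integral_energyDensityDeriv {a c u : ℝ} (hac : a ≤ c) (hcu : c ≤ u)
    (hlam : ContDiff ℝ 1 lam) (hx : ContDiffOn ℝ 2 (fun q : ℝ × ℝ => x q.1 q.2) V)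
    (hV : IsOpen V) (hS : MapsTo (fun p : ℝ × ℝ => (p.1, p.2 - p.1)) (trapezoid a c u) V) :
    ∫ v in c..u, ∫ s in a..v, energyDensityDeriv lam x s v
      = (∫ s in a..u, energyDensity lam x s u) - (∫ s in a..c, energyDensity lam x s c)
        - ∫ s in c..u, energyDensity lam x s s :=
  integral_integral_trapezoid_of_hasDerivAt hac hcu
    (fun _ hp => hasDerivAt_energyDensity (hlam.differentiable one_ne_zero _) hx hV (hS hp))
    (continuousOn_energyDensity hlam.continuous (hx.of_le one_le_two) hV hS)
    (continuousOn_energyDensityDeriv hlam hx hV hS)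

theorem integral_source_eq {g : ℝ → ℝ → ℝ} {a b v : ℝ} (hlam : ContDiff ℝ 1 lam)
    (hx : ContDiffOn ℝ 2 (fun q : ℝ × ℝ => x q.1 q.2) V) (hV : IsOpen V)
    (hpde : ∀ p ∈ V, 2 * lam (p.1 + p.2) * pd2 (pd1 x) p.1 p.2
      + deriv lam (p.1 + p.2) * (pd1 x p.1 p.2 + pd2 x p.1 p.2) = g p.1 p.2)
    (hmem : ∀ s ∈ uIcc a b, (s, v - s) ∈ V) :
    ∫ s in a..b, (g s (v - s) * (pd1 x s (v - s) + pd2 x s (v - s))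
        - 2 * deriv lam v * pd1 x s (v - s) * pd2 x s (v - s))
      = lam v * (pd2 x b (v - b) ^ 2 - pd2 x a (v - a) ^ 2)
        + ∫ s in a..b, energyDensityDeriv lam x s v := by
  have hY₁ := hx.pd2 hV (m := 1) le_rfl
  have hcont {F : ℝ → ℝ → ℝ} (hF : ContinuousOn (fun q : ℝ × ℝ => F q.1 q.2) V) :
      ContinuousOn (fun s => F s (v - s)) (uIcc a b) :=
    hF.comp (by fun_prop) hmem
  have hflux (s) (hs : s ∈ uIcc a b) :
      g s (v - s) * (pd1 x s (v - s) + pd2 x s (v - s))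
        - 2 * deriv lam v * pd1 x s (v - s) * pd2 x s (v - s)
      = energyDensityDeriv lam x s v + lam v * (2 * pd2 x s (v - s)
          * (pd1 (pd2 x) s (v - s) - pd2 (pd2 x) s (v - s))) := by
    have hsym := pd1_pd2_eq_pd2_pd1 hx hV (hmem s hs)
    have hpde' := hpde _ (hmem s hs)
    simp only [add_sub_cancel] at hpde'
    rw [energyDensityDeriv, hsym, ← hpde']
    ring
  have hderiv (s) (hs : s ∈ uIcc a b) :
      HasDerivAt (fun s => lam v * pd2 x s (v - s) ^ 2) (lam v * (2 * pd2 x s (v - s)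
          * (pd1 (pd2 x) s (v - s) - pd2 (pd2 x) s (v - s)))) s := by
    have h := ((hasDerivAt_along_antidiagonal ((hY₁.contDiffAt (hV.mem_nhds (hmem s hs))
      ).differentiableAt one_ne_zero)).pow 2).const_mul (lam v)
    exact h.congr_deriv (by ring)
  have hflux_int : IntervalIntegrable (fun s => lam v * (2 * pd2 x s (v - s)
      * (pd1 (pd2 x) s (v - s) - pd2 (pd2 x) s (v - s)))) volume a b :=
    (continuousOn_const.mul ((continuousOn_const.mul (hcont hY₁.continuousOn)).mul
      ((hcont (hY₁.pd1 hV (m := 0) le_rfl).continuousOn).sub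
        (hcont (hY₁.pd2 hV (m := 0) le_rfl).continuousOn)))).intervalIntegrable
  have hdensity_int : IntervalIntegrable (fun s => energyDensityDeriv lam x s v) volume a b := by
    have hS : MapsTo (fun p : ℝ × ℝ => (p.1, p.2 - p.1)) (uIcc a b ×ˢ {v}) V := by
      rintro ⟨s, v'⟩ ⟨hs, rfl⟩
      exact hmem s hs
    exact ((continuousOn_energyDensityDeriv hlam hx hV hS).comp
      (Continuous.prodMk_left v).continuousOn fun s hs => ⟨hs, rfl⟩).intervalIntegrable
  rw [intervalIntegral.integral_congr hflux, intervalIntegral.integral_add hdensity_int hflux_int,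
    intervalIntegral.integral_eq_sub_of_hasDerivAt hderiv hflux_int]
  ring

end Energy

theorem energy_identity_general
    (c : ℝ) (hc : 0 < c) (lam : ℝ → ℝ) (hlam : ContDiff ℝ 1 lam)
    (g : ℝ → ℝ → ℝ) (x : ℝ → ℝ → ℝ)
    (V : Set (ℝ × ℝ)) (hV : IsOpen V)
    (hΩV : {p : ℝ × ℝ | 0 ≤ p.1 ∧ 0 ≤ p.2 ∧ c ≤ p.1 + p.2} ⊆ V)
    (hx : ContDiffOn ℝ 2 (fun p : ℝ × ℝ => x p.1 p.2) V)
    (hpde : ∀ p ∈ V,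
      2 * lam (p.1 + p.2) * pd2 (pd1 x) p.1 p.2
        + deriv lam (p.1 + p.2) * (pd1 x p.1 p.2 + pd2 x p.1 p.2) = g p.1 p.2)
    (hG₁ : ∀ s : ℝ, c ≤ s → x s 0 = 0)
    (hG₂ : ∀ t : ℝ, c ≤ t → x 0 t = 0)
    (E : ℝ → ℝ)
    (hE : ∀ u : ℝ, c ≤ u →
      E u = ∫ s in (0:ℝ)..u, lam u * ((pd1 x s (u - s)) ^ 2 + (pd2 x s (u - s)) ^ 2)) :
    ∀ u : ℝ, c < u →
      E u = E c + ∫ v in c..u, ∫ s in (0:ℝ)..v,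
        (g s (v - s) * (pd1 x s (v - s) + pd2 x s (v - s))
          - 2 * deriv lam v * pd1 x s (v - s) * pd2 x s (v - s)) := by
  intro u hu
  have hS : MapsTo (fun p : ℝ × ℝ => (p.1, p.2 - p.1)) (trapezoid 0 c u) V := by
    rintro ⟨s, v⟩ hp
    obtain ⟨h0s, hsv, hcv, -⟩ := mem_trapezoid.1 hp
    exact hΩV ⟨h0s, sub_nonneg.2 hsv, by simpa using hcv⟩
  have hslice (v) (hv : v ∈ uIcc c u) :
      ∫ s in (0:ℝ)..v, (g s (v - s) * (pd1 x s (v - s) + pd2 x s (v - s))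
          - 2 * deriv lam v * pd1 x s (v - s) * pd2 x s (v - s))
        = energyDensity lam x v v + ∫ s in (0:ℝ)..v, energyDensityDeriv lam x s v := by
    rw [uIcc_of_le hu.le] at hv
    have hmem (s) (hs : s ∈ uIcc 0 v) : (s, v - s) ∈ V := by
      rw [uIcc_of_le (hc.le.trans hv.1)] at hs
      exact hS (mem_trapezoid.2 ⟨hs.1, hs.2, hv.1, hv.2⟩)
    have hX0 : pd1 x v 0 = 0 := deriv_eq_zero_of_eqOn_Ici (fun s hs => hG₁ s hs) hv.1
    have hY0 : pd2 x 0 v = 0 := deriv_eq_zero_of_eqOn_Ici (fun t ht => hG₂ t ht) hv.1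
    rw [integral_source_eq hlam hx hV hpde hmem, energyDensity, sub_self, sub_zero, hX0, hY0]
    ring
  have hdiag_int : IntervalIntegrable (fun v => energyDensity lam x v v) volume c u := by
    refine ((continuousOn_energyDensity hlam.continuous (hx.of_le one_le_two) hV hS).comp
      (continuous_id.prodMk continuous_id).continuousOn fun v hv => ?_).intervalIntegrable
    rw [uIcc_of_le hu.le] at hv
    exact mem_trapezoid.2 ⟨hc.le.trans hv.1, le_rfl, hv.1, hv.2⟩
  rw [hE u hu.le, hE c le_rfl, intervalIntegral.integral_congr hslice,
    intervalIntegral.integral_add hdiag_int (intervalIntegrable_integral_trapezoid hc.le hu.le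
      (continuousOn_energyDensityDeriv hlam hx hV hS)),
    integral_integral_energyDensityDeriv hc.le hu.le hlam hx hV hS]
  simp only [energyDensity]
  ring

/-- The energy identity: for a `C²` solution of
`2λ(s+t)·x_st + λ'(s+t)·(x_s + x_t) = g` on a neighborhood of
`Ω̄_c = {s,t ≥ 0, s+t ≥ c}` with homogeneous Goursat data, the energy
`E(u) = ∫₀^u λ(u)·(x_s(s,u−s)² + x_t(s,u−s)²) ds` satisfies, for `u > c`,
`E(u) = E(c) + ∫_c^u ∫₀^v (g·(x_s+x_t) − 2λ'(v)·x_s·x_t)(s, v−s) ds dv`. -/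
theorem energy_identity
    (c : ℝ) (hc : 0 < c) (lam : ℝ → ℝ) (hlam : ContDiff ℝ 1 lam)
    (hpos : ∀ u : ℝ, 0 < u → 0 < lam u)
    (g : ℝ → ℝ → ℝ) (x : ℝ → ℝ → ℝ)
    (V : Set (ℝ × ℝ)) (hV : IsOpen V)
    (hΩV : {p : ℝ × ℝ | 0 ≤ p.1 ∧ 0 ≤ p.2 ∧ c ≤ p.1 + p.2} ⊆ V)
    (hg : ContinuousOn (fun p : ℝ × ℝ => g p.1 p.2) V)
    (hx : ContDiffOn ℝ 2 (fun p : ℝ × ℝ => x p.1 p.2) V)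
    (hpde : ∀ p ∈ V,
      2 * lam (p.1 + p.2) * pd2 (pd1 x) p.1 p.2
        + deriv lam (p.1 + p.2) * (pd1 x p.1 p.2 + pd2 x p.1 p.2) = g p.1 p.2)
    (hG₁ : ∀ s : ℝ, c ≤ s → x s 0 = 0)
    (hG₂ : ∀ t : ℝ, c ≤ t → x 0 t = 0)
    (E : ℝ → ℝ)
    (hE : ∀ u : ℝ, c ≤ u →
      E u = ∫ s in (0:ℝ)..u, lam u * ((pd1 x s (u - s)) ^ 2 + (pd2 x s (u - s)) ^ 2)) :
    ∀ u : ℝ, c < u →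
      E u = E c + ∫ v in c..u, ∫ s in (0:ℝ)..v,
        (g s (v - s) * (pd1 x s (v - s) + pd2 x s (v - s))
          - 2 * deriv lam v * pd1 x s (v - s) * pd2 x s (v - s)) :=
  energy_identity_general c hc lam hlam g x V hV hΩV hx hpde hG₁ hG₂ E hE
end

section
/- Let 0 < c < C and let λ₀ : (0,∞) → ℝ be continuously differentiable with λ₀(u) > 0 and λ₀'(u) > 0 for all u ∈ [c, C]. Then there exists a constant M > 0, depending only on λ₀, c, and C, with the following property. Let δ : [c,C] → ℝ be continuously differentiable, let x₀ be a C² solution of 2λ₀(s+t)·(x₀)_st + λ₀'(s+t)·((x₀)_s + (x₀)_t) = 0 on a neighborhood of Ω_{c,C} = {(s,t) : s,t ≥ 0, c ≤ s+t ≤ C}, and let x₁ be a C² solution on a neighborhood of Ω_{c,C} of the linearized equation 2λ₀(s+t)·(x₁)_st + λ₀'(s+t)·((x₁)_s + (x₁)_t) = g(s,t) with forcing g(s,t) = −λ₀(s+t)·δ'(s+t)·((x₀)_s + (x₀)_t)(s,t), satisfying the homogeneous conditions x₁(s,0) = 0 for c ≤ s ≤ C, x₁(0,t) = 0 for c ≤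 t ≤ C, and (x₁)_s = (x₁)_t = 0 on the line s+t = c (so E₁(c) = 0). Then sup_{u ∈ [c,C]} E₁(u) ≤ M · (sup_{u ∈ [c,C]} E₀(u)) · ∫_c^C λ₀(v)·(δ'(v))² dv, where E_i(u) = ∫₀^u λ₀(u)·((x_i)_s(s,u−s)² + (x_i)_t(s,u−s)²) ds for i = 0, 1. -/
noncomputable def energy (lam₀ : ℝ → ℝ) (x : ℝ → ℝ → ℝ) (u : ℝ) : ℝ :=
  ∫ s in (0:ℝ)..u, lam₀ u * ((pd1 x s (u - s)) ^ 2 + (pd2 x s (u - s)) ^ 2)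

/-!
Differentiate `E₁(u) = ∫₀^u λ(u) (x_s² + x_t²)(s, u - s) ds` in `u` (Leibniz rule with a moving
endpoint). Along the line `s + t = u` one has `∂_u x_t(s, u - s) = x_tt` and
`∂_s x_t(s, u - s) = x_st - x_tt`, so the `x_tt` term is an exact `s`-derivative, and the equation
`2λ x_st + λ' (x_s + x_t) = g` eliminates `x_st`:
`E₁'(u) = λ(u) (x_s(u, 0)² + x_t(0, u)²) + ∫₀^u ((x_s + x_t) g - 2 λ' x_s x_t) ds`.
The boundary terms vanish by the Dirichlet data, and completing squares gives
`E₁' ≤ (K + 1) E₁ + δ'(u)² E₀(u)` where `|λ'| ≤ K λ` on `[c, C]`. Since `E₁(c) = 0`, Gronwall's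
inequality yields the estimate with `M = e^{(K + 1)(C - c)} / min λ`.
-/

open Set Metric Function MeasureTheory intervalIntegral Filter Topology Real

section Leibniz

variable {E : Type*} [NormedAddCommGroup E] [NormedSpace ℝ E]

lemma prodMk_mem_closedBall_of_mem_uIcc {s y u ρ : ℝ} (hs : s ∈ uIcc u y) (hy : dist y u ≤ ρ) :
    (s, y) ∈ closedBall (u, u) ρ := by
  rw [mem_closedBall, Prod.dist_eq, max_le_iff, Real.dist_eq]
  exact ⟨(abs_sub_left_of_mem_uIcc hs).trans hy, hy⟩

theorem hasDerivAt_integral_upper_diag [CompleteSpace E] {H : ℝ → ℝ → E} {u ρ : ℝ} (hρ : 0 < ρ)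
    (hH : ContinuousOn (uncurry H) (closedBall (u, u) ρ)) :
    HasDerivAt (fun y => ∫ s in u..y, H s y) (H u u) u := by
  rw [hasDerivAt_iff_isLittleO, Asymptotics.isLittleO_iff]
  intro ε hε
  obtain ⟨δ, hδ, hclose⟩ :=
    Metric.continuousWithinAt_iff.mp (hH (u, u) (mem_closedBall_self hρ.le)) ε hε
  filter_upwards [ball_mem_nhds u (lt_min hρ hδ)] with y hy
  have hmem : ∀ s ∈ uIcc u y, (s, y) ∈ closedBall (u, u) ρ :=
    fun s hs => prodMk_mem_closedBall_of_mem_uIcc hs (hy.le.trans (min_le_left _ _))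
  have hnear : ∀ s ∈ uIcc u y, ‖H s y - H u u‖ ≤ ε := fun s hs => by
    rw [← dist_eq_norm]
    exact (hclose (hmem s hs) ((prodMk_mem_closedBall_of_mem_uIcc hs le_rfl).trans_lt
      (hy.trans_le (min_le_right _ _)))).le
  have hint : IntervalIntegrable (fun s => H s y) volume u y :=
    (hH.comp (by fun_prop) hmem).intervalIntegrable
  calc ‖(∫ s in u..y, H s y) - (∫ s in u..u, H s u) - (y - u) • H u u‖
      = ‖∫ s in u..y, (H s y - H u u)‖ := by
        rw [integral_same, sub_zero, integral_sub hint intervalIntegrable_const,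
          intervalIntegral.integral_const]
    _ ≤ ε * |y - u| :=
        norm_integral_le_of_norm_le_const fun s hs => hnear s (uIoc_subset_uIcc hs)
    _ = ε * ‖y - u‖ := by rw [Real.norm_eq_abs]

theorem hasDerivAt_integral_param_of_continuousOn {H H₂ : ℝ → ℝ → E} {a b u ρ : ℝ}
    (hρ : 0 < ρ) (hH : ContinuousOn (uncurry H) (uIcc a b ×ˢ closedBall u ρ))
    (hH₂ : ContinuousOn (uncurry H₂) (uIcc a b ×ˢ closedBall u ρ))
    (hd : ∀ s ∈ uIcc a b, ∀ y ∈ ball u ρ, HasDerivAt (H s) (H₂ s y) y) :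
    HasDerivAt (fun y => ∫ s in a..b, H s y) (∫ s in a..b, H₂ s u) u := by
  obtain ⟨K, hK⟩ :=
    (isCompact_uIcc.prod (isCompact_closedBall u ρ)).exists_bound_of_continuousOn hH₂
  have slice : ∀ {G : ℝ → ℝ → E}, ContinuousOn (uncurry G) (uIcc a b ×ˢ closedBall u ρ) →
      ∀ y ∈ closedBall u ρ, ContinuousOn (fun s => G s y) (uIcc a b) := fun hG y hy =>
    hG.comp (continuous_id.prodMk continuous_const).continuousOn fun s hs => ⟨hs, hy⟩
  have hu : u ∈ closedBall u ρ := mem_closedBall_self hρ.le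
  refine (hasDerivAt_integral_of_dominated_loc_of_deriv_le (F := fun y s => H s y)
    (F' := fun y s => H₂ s y) (bound := fun _ => K) (ball_mem_nhds u hρ) ?_
    (slice hH u hu).intervalIntegrable
    (((slice hH₂ u hu).mono uIoc_subset_uIcc).aestronglyMeasurable measurableSet_uIoc) ?_
    intervalIntegrable_const ?_).2
  · filter_upwards [ball_mem_nhds u hρ] with y hy
    exact ((slice hH y (ball_subset_closedBall hy)).mono uIoc_subset_uIcc).aestronglyMeasurable
      measurableSet_uIoc
  · exact ae_of_all _ fun s hs y hy => hK (s, y) ⟨uIoc_subset_uIcc hs, ball_subset_closedBall hy⟩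
  · exact ae_of_all _ fun s hs y hy => hd s (uIoc_subset_uIcc hs) y hy

theorem hasDerivAt_integral_upper_param [CompleteSpace E] {H H₂ : ℝ → ℝ → E}
    {W : Set (ℝ × ℝ)} {a u : ℝ} (hW : IsOpen W) (hH : ContinuousOn (uncurry H) W)
    (hH₂ : ContinuousOn (uncurry H₂) W) (hd : ∀ p ∈ W, HasDerivAt (H p.1) (H₂ p.1 p.2) p.2)
    (hseg : ∀ s ∈ uIcc a u, (s, u) ∈ W) :
    HasDerivAt (fun y => ∫ s in a..y, H s y) (H u u + ∫ s in a..u, H₂ s u) u := by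
  obtain ⟨ρ, hρ, hρW⟩ := (isCompact_uIcc.prod isCompact_singleton).exists_cthickening_subset_open
    hW (by rintro ⟨s, y⟩ ⟨hs, rfl⟩; exact hseg s hs)
  have hrect : uIcc a u ×ˢ closedBall u ρ ⊆ W := fun p hp =>
    hρW (mem_cthickening_of_dist_le p (p.1, u) ρ _ ⟨hp.1, rfl⟩
      (by rw [Prod.dist_eq, dist_self]; exact max_le hρ.le hp.2))
  have hsq : closedBall (u, u) ρ ⊆ W := fun p hp =>
    hρW (mem_cthickening_of_dist_le p (u, u) ρ _ ⟨right_mem_uIcc, rfl⟩ hp)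
  have hslice : ∀ {a' b' y : ℝ}, (∀ s ∈ uIcc a' b', (s, y) ∈ W) →
      IntervalIntegrable (fun s => H s y) volume a' b' := fun hmem =>
    (hH.comp (continuous_id.prodMk continuous_const).continuousOn hmem).intervalIntegrable
  have hsplit : (fun y => (∫ s in a..u, H s y) + ∫ s in u..y, H s y) =ᶠ[𝓝 u]
      fun y => ∫ s in a..y, H s y := by
    filter_upwards [ball_mem_nhds u hρ] with y hy
    exact integral_add_adjacent_intervals
      (hslice fun s hs => hrect ⟨hs, ball_subset_closedBall hy⟩)
      (hslice fun s hs => hsq (prodMk_mem_closedBall_of_mem_uIcc hs hy.le))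
  rw [add_comm]
  refine HasDerivAt.congr_of_eventuallyEq ?_ hsplit.symm
  exact (hasDerivAt_integral_param_of_continuousOn hρ (hH.mono hrect) (hH₂.mono hrect)
    fun s hs y hy => hd (s, y) (hrect ⟨hs, ball_subset_closedBall hy⟩)).add
    (hasDerivAt_integral_upper_diag hρ (hH.mono hsq))

end Leibniz

lemma fderiv_fderiv_apply {E F : Type*} [NormedAddCommGroup E] [NormedSpace ℝ E]
    [NormedAddCommGroup F] [NormedSpace ℝ F] {f : E → F} {p : E}
    (hf : DifferentiableAt ℝ (fderiv ℝ f) p) (v w : E) :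
    fderiv ℝ (fun q => fderiv ℝ f q w) p v = fderiv ℝ (fderiv ℝ f) p v w := by
  rw [fderiv_clm_apply hf (differentiableAt_const w)]
  simp

section PartialDerivatives

variable {f : ℝ → ℝ → ℝ} {V : Set (ℝ × ℝ)} {s t u : ℝ}

lemma pd1_eq_fderiv_s17 (hf : DifferentiableAt ℝ (uncurry f) (s, t)) :
    pd1 f s t = fderiv ℝ (uncurry f) (s, t) (1, 0) := by
  have h := hf.hasFDerivAt.comp_hasDerivAt s ((hasDerivAt_id' s).prodMk (hasDerivAt_const s t))
  exact h.deriv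

lemma pd2_eq_fderiv_s17 (hf : DifferentiableAt ℝ (uncurry f) (s, t)) :
    pd2 f s t = fderiv ℝ (uncurry f) (s, t) (0, 1) :=
  (hf.hasFDerivAt.comp_hasDerivAt t ((hasDerivAt_const t s).prodMk (hasDerivAt_id' t))).deriv

lemma hasDerivAt_pd2_s17 (hf : DifferentiableAt ℝ (uncurry f) (s, t)) :
    HasDerivAt (f s) (pd2 f s t) t :=
  (hf.comp t ((differentiableAt_const s).prodMk differentiableAt_id)).hasDerivAt

lemma hasDerivAt_antidiagonal (hf : DifferentiableAt ℝ (uncurry f) (s, u - s)) :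
    HasDerivAt (fun s' => f s' (u - s')) (pd1 f s (u - s) - pd2 f s (u - s)) s := by
  have hline : HasDerivAt (fun s' : ℝ => (s', u - s')) ((1, 0) - (0, 1) : ℝ × ℝ) s := by
    simpa using (hasDerivAt_id s).prodMk ((hasDerivAt_id s).const_sub u)
  rw [pd1_eq_fderiv_s17 hf, pd2_eq_fderiv_s17 hf, ← map_sub]
  exact hf.hasFDerivAt.comp_hasDerivAt s hline

lemma pd1_eq_zero_of_forall_mem {U : Set ℝ} (hU : U ∈ 𝓝 s) (h : ∀ s' ∈ U, f s' t = 0) :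
    pd1 f s t = 0 := by
  have hzero : (fun s' => f s' t) =ᶠ[𝓝 s] fun _ => 0 := eventually_of_mem hU h
  rw [pd1, hzero.deriv_eq, deriv_const]

lemma pd2_eq_zero_of_forall_mem {U : Set ℝ} (hU : U ∈ 𝓝 t) (h : ∀ t' ∈ U, f s t' = 0) :
    pd2 f s t = 0 := by
  have hzero : f s =ᶠ[𝓝 t] fun _ => 0 := eventually_of_mem hU h
  rw [pd2, hzero.deriv_eq, deriv_const]

lemma contDiffOn_pd1 {n : WithTop ℕ∞} (hV : IsOpen V) (hf : ContDiffOn ℝ (n + 1) (uncurry f) V) :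
    ContDiffOn ℝ n (uncurry (pd1 f)) V :=
  ((hf.fderiv_of_isOpen hV le_rfl).clm_apply contDiffOn_const).congr fun p hp =>
    pd1_eq_fderiv_s17 ((hf.differentiableOn (by simp)).differentiableAt (hV.mem_nhds hp))

lemma contDiffOn_pd2 {n : WithTop ℕ∞} (hV : IsOpen V) (hf : ContDiffOn ℝ (n + 1) (uncurry f) V) :
    ContDiffOn ℝ n (uncurry (pd2 f)) V :=
  ((hf.fderiv_of_isOpen hV le_rfl).clm_apply contDiffOn_const).congr fun p hp =>
    pd2_eq_fderiv_s17 ((hf.differentiableOn (by simp)).differentiableAt (hV.mem_nhds hp))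

lemma continuousOn_pd_antidiagonal {n : WithTop ℕ∞} (hV : IsOpen V)
    (hf : ContDiffOn ℝ (n + 1) (uncurry f) V) (hu : 0 ≤ u)
    (hseg : ∀ s ∈ Icc 0 u, (s, u - s) ∈ V) :
    ContinuousOn (fun s => pd1 f s (u - s)) (uIcc 0 u) ∧
      ContinuousOn (fun s => pd2 f s (u - s)) (uIcc 0 u) := by
  have hline : ContinuousOn (fun s : ℝ => (s, u - s)) (uIcc 0 u) :=
    (continuous_id.prodMk (continuous_const.sub continuous_id)).continuousOn
  have hmaps : MapsTo (fun s : ℝ => (s, u - s)) (uIcc 0 u) V := fun s hs =>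
    hseg s (uIcc_of_le hu ▸ hs)
  exact ⟨(contDiffOn_pd1 hV hf).continuousOn.comp hline hmaps,
    (contDiffOn_pd2 hV hf).continuousOn.comp hline hmaps⟩

lemma fderiv_uncurry_pd1 (hV : IsOpen V) (hf : ContDiffOn ℝ 2 (uncurry f) V) {p : ℝ × ℝ}
    (hp : p ∈ V) (v : ℝ × ℝ) :
    fderiv ℝ (uncurry (pd1 f)) p v = fderiv ℝ (fderiv ℝ (uncurry f)) p v (1, 0) := by
  have heq : uncurry (pd1 f) =ᶠ[𝓝 p] fun q => fderiv ℝ (uncurry f) q (1, 0) := by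
    filter_upwards [hV.mem_nhds hp] with q hq
    exact pd1_eq_fderiv_s17 ((hf.differentiableOn (by simp)).differentiableAt (hV.mem_nhds hq))
  rw [heq.fderiv_eq, fderiv_fderiv_apply (((hf.contDiffAt (hV.mem_nhds hp)).fderiv_right
    (m := 1) le_rfl).differentiableAt one_ne_zero)]

lemma fderiv_uncurry_pd2 (hV : IsOpen V) (hf : ContDiffOn ℝ 2 (uncurry f) V) {p : ℝ × ℝ}
    (hp : p ∈ V) (v : ℝ × ℝ) :
    fderiv ℝ (uncurry (pd2 f)) p v = fderiv ℝ (fderiv ℝ (uncurry f)) p v (0, 1) := by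
  have heq : uncurry (pd2 f) =ᶠ[𝓝 p] fun q => fderiv ℝ (uncurry f) q (0, 1) := by
    filter_upwards [hV.mem_nhds hp] with q hq
    exact pd2_eq_fderiv_s17 ((hf.differentiableOn (by simp)).differentiableAt (hV.mem_nhds hq))
  rw [heq.fderiv_eq, fderiv_fderiv_apply (((hf.contDiffAt (hV.mem_nhds hp)).fderiv_right
    (m := 1) le_rfl).differentiableAt one_ne_zero)]

lemma pd1_pd2_eq_pd2_pd1_s17 (hV : IsOpen V) (hf : ContDiffOn ℝ 2 (uncurry f) V) {p : ℝ × ℝ}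
    (hp : p ∈ V) : pd1 (pd2 f) p.1 p.2 = pd2 (pd1 f) p.1 p.2 := by
  have hdiff : ∀ {g : ℝ → ℝ → ℝ}, ContDiffOn ℝ 1 (uncurry g) V →
      DifferentiableAt ℝ (uncurry g) p := fun hg =>
    (hg.differentiableOn one_ne_zero).differentiableAt (hV.mem_nhds hp)
  rw [pd1_eq_fderiv_s17 (hdiff (contDiffOn_pd2 hV hf)), pd2_eq_fderiv_s17 (hdiff (contDiffOn_pd1 hV hf)),
    fderiv_uncurry_pd2 hV hf hp, fderiv_uncurry_pd1 hV hf hp]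
  exact (hf.contDiffAt (hV.mem_nhds hp)).isSymmSndFDerivAt (by simp) _ _

lemma hasDerivAt_sq_pd2_antidiagonal (hV : IsOpen V) (hf : ContDiffOn ℝ 2 (uncurry f) V)
    (hp : (s, u - s) ∈ V) :
    HasDerivAt (fun s' => pd2 f s' (u - s') ^ 2)
      (2 * pd2 f s (u - s) * (pd2 (pd1 f) s (u - s) - pd2 (pd2 f) s (u - s))) s := by
  have h := hasDerivAt_antidiagonal (((contDiffOn_pd2 (n := 1) hV hf).differentiableOn
    one_ne_zero).differentiableAt (hV.mem_nhds hp))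
  rw [pd1_pd2_eq_pd2_pd1_s17 hV hf hp] at h
  exact (h.fun_pow 2).congr_deriv (by norm_num)

end PartialDerivatives

section Energy

variable {lam : ℝ → ℝ} {x : ℝ → ℝ → ℝ} {V : Set (ℝ × ℝ)} {s u : ℝ}

lemma hasDerivAt_energy_density (hlam : ContDiffOn ℝ 1 lam (Ioi 0)) (hV : IsOpen V)
    (hx : ContDiffOn ℝ 2 (uncurry x) V) (hu : 0 < u) (hp : (s, u - s) ∈ V) :
    HasDerivAt (fun y => lam y * (pd1 x s (y - s) ^ 2 + pd2 x s (y - s) ^ 2))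
      (deriv lam u * (pd1 x s (u - s) ^ 2 + pd2 x s (u - s) ^ 2) + 2 * lam u *
        (pd1 x s (u - s) * pd2 (pd1 x) s (u - s) + pd2 x s (u - s) * pd2 (pd2 x) s (u - s))) u := by
  have hd : ∀ {g : ℝ → ℝ → ℝ}, ContDiffOn ℝ 1 (uncurry g) V →
      HasDerivAt (fun y => g s (y - s)) (pd2 g s (u - s)) u := fun hg =>
    (hasDerivAt_pd2_s17 ((hg.differentiableOn one_ne_zero).differentiableAt
      (hV.mem_nhds hp))).comp_sub_const u s
  have hlam' : HasDerivAt lam (deriv lam u) u :=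
    ((hlam.differentiableOn one_ne_zero).differentiableAt (Ioi_mem_nhds hu)).hasDerivAt
  refine (hlam'.fun_mul (((hd (contDiffOn_pd1 hV hx)).fun_pow 2).fun_add
    ((hd (contDiffOn_pd2 hV hx)).fun_pow 2))).congr_deriv ?_
  norm_num
  ring

theorem hasDerivAt_energy (hlam : ContDiffOn ℝ 1 lam (Ioi 0)) (hV : IsOpen V)
    (hx : ContDiffOn ℝ 2 (uncurry x) V) (hu : 0 < u) (hseg : ∀ s ∈ Icc 0 u, (s, u - s) ∈ V) :
    HasDerivAt (energy lam x)
      (lam u * (pd1 x u 0 ^ 2 + pd2 x u 0 ^ 2) + ∫ s in 0..u,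
        (deriv lam u * (pd1 x s (u - s) ^ 2 + pd2 x s (u - s) ^ 2) + 2 * lam u *
          (pd1 x s (u - s) * pd2 (pd1 x) s (u - s) + pd2 x s (u - s) * pd2 (pd2 x) s (u - s))))
      u := by
  set W : Set (ℝ × ℝ) := {q | (q.1, q.2 - q.1) ∈ V ∧ 0 < q.2}
  have hW : IsOpen W :=
    (hV.preimage (by fun_prop)).inter (isOpen_lt continuous_const continuous_snd)
  have along : ∀ {g : ℝ → ℝ → ℝ}, ContinuousOn (uncurry g) V →
      ContinuousOn (fun q : ℝ × ℝ => g q.1 (q.2 - q.1)) W := fun hg =>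
    hg.comp (continuous_fst.prodMk (continuous_snd.sub continuous_fst)).continuousOn
      fun _ hq => hq.1
  have hlamW : ContinuousOn (fun q : ℝ × ℝ => lam q.2) W :=
    hlam.continuousOn.comp continuous_snd.continuousOn fun q hq => hq.2
  have hlam'W : ContinuousOn (fun q : ℝ × ℝ => deriv lam q.2) W :=
    (hlam.continuousOn_deriv_of_isOpen isOpen_Ioi le_rfl).comp continuous_snd.continuousOn
      fun q hq => hq.2
  have hx₁ : ContDiffOn ℝ 1 (uncurry (pd1 x)) V := contDiffOn_pd1 hV hx
  have hx₂ : ContDiffOn ℝ 1 (uncurry (pd2 x)) V := contDiffOn_pd2 hV hx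
  have h₁ := along hx₁.continuousOn
  have h₂ := along hx₂.continuousOn
  have h₁₂ := along (contDiffOn_pd2 (n := 0) hV hx₁).continuousOn
  have h₂₂ := along (contDiffOn_pd2 (n := 0) hV hx₂).continuousOn
  have := hasDerivAt_integral_upper_param
    (H := fun s y => lam y * (pd1 x s (y - s) ^ 2 + pd2 x s (y - s) ^ 2))
    (H₂ := fun s y => deriv lam y * (pd1 x s (y - s) ^ 2 + pd2 x s (y - s) ^ 2) + 2 * lam y *
        (pd1 x s (y - s) * pd2 (pd1 x) s (y - s) + pd2 x s (y - s) * pd2 (pd2 x) s (y - s)))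
    hW (hlamW.fun_mul ((h₁.fun_pow 2).fun_add (h₂.fun_pow 2)))
    ((hlam'W.fun_mul ((h₁.fun_pow 2).fun_add (h₂.fun_pow 2))).fun_add
      ((continuousOn_const.fun_mul hlamW).fun_mul ((h₁.fun_mul h₁₂).fun_add (h₂.fun_mul h₂₂))))
    (fun q hq => hasDerivAt_energy_density hlam hV hx hq.2 hq.1)
    (fun s hs => ⟨hseg s (uIcc_of_le hu.le ▸ hs), hu⟩)
  simp only [sub_self] at this
  exact this

theorem hasDerivAt_energy_of_pde {g : ℝ × ℝ → ℝ} (hlam : ContDiffOn ℝ 1 lam (Ioi 0))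
    (hV : IsOpen V) (hx : ContDiffOn ℝ 2 (uncurry x) V) (hu : 0 < u)
    (hseg : ∀ s ∈ Icc 0 u, (s, u - s) ∈ V)
    (hpde : ∀ p ∈ V, 2 * lam (p.1 + p.2) * pd2 (pd1 x) p.1 p.2
      + deriv lam (p.1 + p.2) * (pd1 x p.1 p.2 + pd2 x p.1 p.2) = g p) :
    HasDerivAt (energy lam x)
      (lam u * (pd1 x u 0 ^ 2 + pd2 x 0 u ^ 2) + ∫ s in 0..u,
        ((pd1 x s (u - s) + pd2 x s (u - s)) * g (s, u - s)
          - 2 * deriv lam u * pd1 x s (u - s) * pd2 x s (u - s))) u := by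
  refine (hasDerivAt_energy hlam hV hx hu hseg).congr_deriv ?_
  have hseg' : ∀ s ∈ uIcc 0 u, (s, u - s) ∈ V := fun s hs => hseg s (uIcc_of_le hu.le ▸ hs)
  obtain ⟨hA, hB⟩ := continuousOn_pd_antidiagonal (n := 1) hV hx hu.le hseg
  obtain ⟨-, hAt⟩ := continuousOn_pd_antidiagonal (n := 0) hV (contDiffOn_pd1 hV hx) hu.le hseg
  obtain ⟨-, hBt⟩ := continuousOn_pd_antidiagonal (n := 0) hV (contDiffOn_pd2 hV hx) hu.le hseg
  have hflux := integral_eq_sub_of_hasDerivAt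
    (fun s hs => (hasDerivAt_sq_pd2_antidiagonal hV hx (hseg' s hs)).const_mul (lam u))
    (ContinuousOn.intervalIntegrable (by fun_prop))
  simp only [sub_self, sub_zero] at hflux
  -- By the equation and `x_st = x_ts`, the `u`-derivative of the density plus the `s`-derivative
  -- of `λ(u) x_t(s, u - s)²` is `(x_s + x_t) g - 2 λ' x_s x_t`.
  symm
  rw [integral_congr (g := fun s => (deriv lam u * (pd1 x s (u - s) ^ 2 + pd2 x s (u - s) ^ 2)
      + 2 * lam u * (pd1 x s (u - s) * pd2 (pd1 x) s (u - s)
        + pd2 x s (u - s) * pd2 (pd2 x) s (u - s))) + lam u * (2 * pd2 x s (u - s)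
          * (pd2 (pd1 x) s (u - s) - pd2 (pd2 x) s (u - s)))) fun s hs => ?_,
    integral_add (ContinuousOn.intervalIntegrable (by fun_prop))
      (ContinuousOn.intervalIntegrable (by fun_prop)), hflux]
  · ring
  have h := hpde _ (hseg' s hs)
  simp only [add_sub_cancel] at h
  linear_combination -(pd1 x s (u - s) + pd2 x s (u - s)) * h

lemma energy_nonneg (hu : 0 ≤ u) (hlam : 0 ≤ lam u) : 0 ≤ energy lam x u :=
  integral_nonneg hu fun _ _ => by positivity

lemma energy_eq_zero (hu : 0 ≤ u)
    (h : ∀ s ∈ Icc 0 u, pd1 x s (u - s) = 0 ∧ pd2 x s (u - s) = 0) : energy lam x u = 0 := by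
  rw [energy, integral_congr (g := fun _ => 0) fun s hs => ?_, intervalIntegral.integral_zero]
  rw [uIcc_of_le hu] at hs
  simp [(h s hs).1, (h s hs).2]

lemma continuousOn_energy {c C : ℝ} (hlam : ContDiffOn ℝ 1 lam (Ioi 0)) (hV : IsOpen V)
    (hx : ContDiffOn ℝ 2 (uncurry x) V) (hc : 0 < c)
    (hseg : ∀ u ∈ Icc c C, ∀ s ∈ Icc 0 u, (s, u - s) ∈ V) :
    ContinuousOn (energy lam x) (Icc c C) := fun u hu =>
  (hasDerivAt_energy hlam hV hx (hc.trans_le hu.1) (hseg u hu)).continuousAt.continuousWithinAt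

end Energy

lemma linearized_integrand_le {l l' d K A B A₀ B₀ : ℝ} (hl : 0 < l) (hK : |l'| ≤ K * l) :
    (A + B) * -(l * d * (A₀ + B₀)) - 2 * l' * A * B
      ≤ (K + 1) * (l * (A ^ 2 + B ^ 2)) + d ^ 2 * (l * (A₀ ^ 2 + B₀ ^ 2)) := by
  have h₁ : -(2 * l' * A * B) ≤ |l'| * (A ^ 2 + B ^ 2) := by
    cases abs_cases l' <;> nlinarith [sq_nonneg (A + B), sq_nonneg (A - B)]
  have h₂ : |l'| * (A ^ 2 + B ^ 2) ≤ K * l * (A ^ 2 + B ^ 2) := by gcongr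
  have h₃ : 0 ≤ l * ((A + B + d * (A₀ + B₀)) ^ 2 + (A - B) ^ 2 + (d * (A₀ - B₀)) ^ 2) := by
    positivity
  nlinarith [h₁, h₂, h₃]

theorem deriv_energy_le {lam δ : ℝ → ℝ} {x₀ x₁ : ℝ → ℝ → ℝ} {V : Set (ℝ × ℝ)} {u K : ℝ}
    (hlam : ContDiffOn ℝ 1 lam (Ioi 0)) (hV : IsOpen V) (hx₀ : ContDiffOn ℝ 1 (uncurry x₀) V)
    (hx₁ : ContDiffOn ℝ 2 (uncurry x₁) V) (hu : 0 < u) (hseg : ∀ s ∈ Icc 0 u, (s, u - s) ∈ V)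
    (hl : 0 < lam u) (hK : |deriv lam u| ≤ K * lam u)
    (hpde : ∀ p ∈ V, 2 * lam (p.1 + p.2) * pd2 (pd1 x₁) p.1 p.2
      + deriv lam (p.1 + p.2) * (pd1 x₁ p.1 p.2 + pd2 x₁ p.1 p.2)
        = -(lam (p.1 + p.2) * deriv δ (p.1 + p.2) * (pd1 x₀ p.1 p.2 + pd2 x₀ p.1 p.2)))
    (hA : pd1 x₁ u 0 = 0) (hB : pd2 x₁ 0 u = 0) :
    DifferentiableAt ℝ (energy lam x₁) u ∧
      deriv (energy lam x₁) u ≤ (K + 1) * energy lam x₁ u + deriv δ u ^ 2 * energy lam x₀ u := by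
  have hE := hasDerivAt_energy_of_pde hlam hV hx₁ hu hseg hpde
  refine ⟨hE.differentiableAt, ?_⟩
  obtain ⟨hA₀, hB₀⟩ := continuousOn_pd_antidiagonal (n := 0) hV hx₀ hu.le hseg
  obtain ⟨hA₁, hB₁⟩ := continuousOn_pd_antidiagonal (n := 1) hV hx₁ hu.le hseg
  rw [hE.deriv, hA, hB, energy, energy, ← intervalIntegral.integral_const_mul,
    ← intervalIntegral.integral_const_mul,
    ← integral_add (ContinuousOn.intervalIntegrable (by fun_prop))
      (ContinuousOn.intervalIntegrable (by fun_prop))]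
  simp only [add_sub_cancel, ne_eq, OfNat.ofNat_ne_zero, not_false_eq_true, zero_pow, add_zero,
    mul_zero, zero_add]
  exact integral_mono_on hu.le (ContinuousOn.intervalIntegrable (by fun_prop))
    (ContinuousOn.intervalIntegrable (by fun_prop)) fun s _ => linearized_integrand_le hl hK

theorem le_exp_mul_of_deriv_le {f g : ℝ → ℝ} {a c C : ℝ} (ha : 0 ≤ a)
    (hf : ContinuousOn f (Icc c C)) (hf' : ∀ v ∈ Ioo c C, DifferentiableAt ℝ f v)
    (hg : ContinuousOn g (Icc c C)) (hg₀ : ∀ v ∈ Icc c C, 0 ≤ g v) (hfc : 0 ≤ f c)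
    (hbound : ∀ v ∈ Ioo c C, deriv f v ≤ a * f v + g v) :
    ∀ u ∈ Icc c C, f u ≤ exp (a * (C - c)) * (f c + ∫ v in c..C, g v) := by
  intro u hu
  have hcC : c ≤ C := hu.1.trans hu.2
  set e : ℝ → ℝ := fun v => exp (-(a * (v - c)))
  have he : Continuous e := by fun_prop
  have heg : ContinuousOn (fun v => e v * g v) (Icc c C) := he.continuousOn.fun_mul hg
  set ψ : ℝ → ℝ := fun v => e v * f v - ∫ w in c..v, e w * g w
  have hψ' : ∀ v ∈ Ioo c C, HasDerivAt ψ (e v * (deriv f v - a * f v - g v)) v := by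
    intro v hv
    have he' : HasDerivAt e (e v * -a) v := by
      simpa using ((((hasDerivAt_id v).sub_const c).const_mul a).neg).exp
    have hprim : HasDerivAt (fun v => ∫ w in c..v, e w * g w) (e v * g v) v :=
      integral_hasDerivAt_right
        ((heg.mono (Icc_subset_Icc_right hv.2.le)).intervalIntegrable_of_Icc hv.1.le)
        (heg.mono Ioo_subset_Icc_self |>.stronglyMeasurableAtFilter isOpen_Ioo v hv)
        (heg.continuousAt (Icc_mem_nhds hv.1 hv.2))
    exact ((he'.fun_mul (hf' v hv).hasDerivAt).fun_sub hprim).congr_deriv (by ring)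
  have hψanti : AntitoneOn ψ (Icc c C) := by
    refine antitoneOn_of_deriv_nonpos (convex_Icc c C) ?_ ?_ ?_
    · refine (he.continuousOn.fun_mul hf).fun_sub ?_
      rw [← uIcc_of_le hcC] at heg ⊢
      exact continuousOn_primitive_interval (heg.integrableOn_compact isCompact_uIcc)
    · rw [interior_Icc]
      exact fun v hv => (hψ' v hv).differentiableAt.differentiableWithinAt
    · rw [interior_Icc]
      intro v hv
      rw [(hψ' v hv).deriv]
      exact mul_nonpos_of_nonneg_of_nonpos (exp_pos _).le (by linarith [hbound v hv])
  have hψu : e u * f u ≤ f c + ∫ v in c..u, e v * g v := by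
    have := hψanti ⟨le_rfl, hcC⟩ hu hu.1
    simp only [ψ, e, sub_self, mul_zero, neg_zero, exp_zero, one_mul, integral_same] at this
    linarith
  have hweight : ∫ v in c..u, e v * g v ≤ ∫ v in c..C, g v := by
    refine (integral_mono_on hu.1
      ((heg.mono (Icc_subset_Icc_right hu.2)).intervalIntegrable_of_Icc hu.1)
      ((hg.mono (Icc_subset_Icc_right hu.2)).intervalIntegrable_of_Icc hu.1) fun v hv => ?_).trans
      (integral_mono_interval le_rfl hu.1 hu.2 ((ae_restrict_iff' measurableSet_Ioc).2
        (ae_of_all _ fun v hv => hg₀ v (Ioc_subset_Icc_self hv)))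
        (hg.intervalIntegrable_of_Icc hcC))
    exact mul_le_of_le_one_left (hg₀ v ⟨hv.1, hv.2.trans hu.2⟩)
      (exp_le_one_iff.mpr (by nlinarith [hv.1]))
  calc f u = exp (a * (u - c)) * (e u * f u) := by
        rw [← mul_assoc, ← exp_add]; simp
    _ ≤ exp (a * (u - c)) * (f c + ∫ v in c..C, g v) := by gcongr; linarith
    _ ≤ exp (a * (C - c)) * (f c + ∫ v in c..C, g v) := by
        have := integral_nonneg (μ := volume) hcC fun v hv => hg₀ v hv
        gcongr
        exact hu.2

lemma exists_pos_le_and_abs_deriv_le {lam : ℝ → ℝ} {c C : ℝ} (hc : 0 < c) (hcC : c ≤ C)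
    (hlam : ContDiffOn ℝ 1 lam (Ioi 0)) (hpos : ∀ u ∈ Icc c C, 0 < lam u) :
    ∃ m > 0, ∃ K ≥ 0, ∀ u ∈ Icc c C, m ≤ lam u ∧ |deriv lam u| ≤ K * lam u := by
  have hsub : Icc c C ⊆ Ioi 0 := fun u hu => hc.trans_le hu.1
  obtain ⟨u₀, hu₀, hmin⟩ :=
    isCompact_Icc.exists_isMinOn (nonempty_Icc.2 hcC) (hlam.continuousOn.mono hsub)
  obtain ⟨L, hL⟩ := isCompact_Icc.exists_bound_of_continuousOn
    ((hlam.continuousOn_deriv_of_isOpen isOpen_Ioi le_rfl).mono hsub)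
  have hm := hpos u₀ hu₀
  refine ⟨lam u₀, hm, max L 0 / lam u₀, by positivity, fun u hu => ⟨hmin hu, ?_⟩⟩
  calc |deriv lam u| ≤ max L 0 := (hL u hu).trans (le_max_left _ _)
    _ = max L 0 / lam u₀ * lam u₀ := (div_mul_cancel₀ _ hm.ne').symm
    _ ≤ max L 0 / lam u₀ * lam u := by gcongr; exact hmin hu

theorem linear_stability_estimate_general
    (c C : ℝ) (hc : 0 < c) (hcC : c < C) (lam₀ : ℝ → ℝ)
    (hlam₀ : ContDiffOn ℝ 1 lam₀ (Set.Ioi 0))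
    (hpos : ∀ u ∈ Set.Icc c C, 0 < lam₀ u) :
    ∃ M : ℝ, 0 < M ∧
      ∀ (δ : ℝ → ℝ), ContDiff ℝ 1 δ →
      ∀ (x₀ x₁ : ℝ → ℝ → ℝ) (V : Set (ℝ × ℝ)), IsOpen V →
        {p : ℝ × ℝ | 0 ≤ p.1 ∧ 0 ≤ p.2 ∧ c ≤ p.1 + p.2 ∧ p.1 + p.2 ≤ C} ⊆ V →
        ContDiffOn ℝ 2 (fun p : ℝ × ℝ => x₀ p.1 p.2) V →
        ContDiffOn ℝ 2 (fun p : ℝ × ℝ => x₁ p.1 p.2) V →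
        (∀ p ∈ V,
          2 * lam₀ (p.1 + p.2) * pd2 (pd1 x₀) p.1 p.2
            + deriv lam₀ (p.1 + p.2) * (pd1 x₀ p.1 p.2 + pd2 x₀ p.1 p.2) = 0) →
        (∀ p ∈ V,
          2 * lam₀ (p.1 + p.2) * pd2 (pd1 x₁) p.1 p.2
            + deriv lam₀ (p.1 + p.2) * (pd1 x₁ p.1 p.2 + pd2 x₁ p.1 p.2)
          = -(lam₀ (p.1 + p.2) * deriv δ (p.1 + p.2)
              * (pd1 x₀ p.1 p.2 + pd2 x₀ p.1 p.2))) →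
        (∀ s ∈ Set.Icc c C, x₁ s 0 = 0) →
        (∀ t ∈ Set.Icc c C, x₁ 0 t = 0) →
        (∀ s ∈ Set.Icc (0:ℝ) c, pd1 x₁ s (c - s) = 0 ∧ pd2 x₁ s (c - s) = 0) →
        sSup (energy lam₀ x₁ '' Set.Icc c C)
          ≤ M * sSup (energy lam₀ x₀ '' Set.Icc c C)
            * ∫ v in c..C, lam₀ v * (deriv δ v) ^ 2 := by
  obtain ⟨m, hm, K, hK, hbounds⟩ := exists_pos_le_and_abs_deriv_le hc hcC.le hlam₀ hpos
  refine ⟨exp ((K + 1) * (C - c)) / m, by positivity, ?_⟩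
  intro δ hδ x₀ x₁ V hV hΩ hx₀ hx₁ _ hpde hbot hleft hinit
  have hseg : ∀ u ∈ Icc c C, ∀ s ∈ Icc 0 u, (s, u - s) ∈ V := fun u hu s hs =>
    hΩ ⟨hs.1, by simp [hs.2], by simp [hu.1], by simp [hu.2]⟩
  set S₀ := sSup (energy lam₀ x₀ '' Icc c C)
  have hE₀ : ∀ u ∈ Icc c C, energy lam₀ x₀ u ≤ S₀ := fun u hu =>
    le_csSup (isCompact_Icc.bddAbove_image (continuousOn_energy hlam₀ hV hx₀ hc hseg))
      (mem_image_of_mem _ hu)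
  have hS₀ : 0 ≤ S₀ := (energy_nonneg hc.le (hpos c (left_mem_Icc.2 hcC.le)).le).trans
    (hE₀ c (left_mem_Icc.2 hcC.le))
  have hgrowth : ∀ v ∈ Ioo c C, DifferentiableAt ℝ (energy lam₀ x₁) v ∧ deriv (energy lam₀ x₁) v
      ≤ (K + 1) * energy lam₀ x₁ v + S₀ / m * (lam₀ v * deriv δ v ^ 2) := by
    intro v hv
    have hv' := Ioo_subset_Icc_self hv
    have hnhds : Icc c C ∈ 𝓝 v := Icc_mem_nhds hv.1 hv.2
    obtain ⟨hd, hle⟩ := deriv_energy_le hlam₀ hV (hx₀.of_le one_le_two) hx₁ (hc.trans hv.1)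
      (hseg v hv') (hpos v hv') (hbounds v hv').2 hpde (pd1_eq_zero_of_forall_mem hnhds hbot)
      (pd2_eq_zero_of_forall_mem hnhds hleft)
    have hE₀v : energy lam₀ x₀ v ≤ S₀ / m * lam₀ v := (hE₀ v hv').trans <| by
      rw [div_mul_eq_mul_div, le_div_iff₀ hm]; exact mul_le_mul_of_nonneg_left (hbounds v hv').1 hS₀
    exact ⟨hd, by nlinarith [mul_le_mul_of_nonneg_left hE₀v (sq_nonneg (deriv δ v))]⟩
  refine csSup_le ((nonempty_Icc.2 hcC.le).image _) (forall_mem_image.2 fun u hu => ?_)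
  refine (le_exp_mul_of_deriv_le (by positivity) (continuousOn_energy hlam₀ hV hx₁ hc hseg)
    (fun v hv => (hgrowth v hv).1) ?_ (fun v hv => ?_) (energy_eq_zero hc.le hinit).ge
    (fun v hv => (hgrowth v hv).2) u hu).trans_eq ?_
  · exact continuousOn_const.fun_mul ((hlam₀.continuousOn.mono fun v hv => hc.trans_le hv.1).fun_mul
      ((hδ.continuous_deriv le_rfl).continuousOn.fun_pow 2))
  · have := hpos v hv; positivity
  · rw [energy_eq_zero hc.le hinit, zero_add, intervalIntegral.integral_const_mul]; ring

/-- Linear stability estimate: there is a constant `M > 0`, depending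
only on `λ₀`, `c`, `C`, such that for every relative perturbation `δ`, every solution
`x₀` of the homogeneous hodograph equation, and every solution `x₁` of the linearized
equation with forcing `g = −λ₀(s+t)·δ'(s+t)·((x₀)_s + (x₀)_t)` and homogeneous data,
`sup_{u∈[c,C]} E₁(u) ≤ M · (sup_{u∈[c,C]} E₀(u)) · ∫_c^C λ₀(v)·δ'(v)² dv`. -/
theorem linear_stability_estimate
    (c C : ℝ) (hc : 0 < c) (hcC : c < C) (lam₀ : ℝ → ℝ)
    (hlam₀ : ContDiffOn ℝ 1 lam₀ (Set.Ioi 0))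
    (hpos : ∀ u ∈ Set.Icc c C, 0 < lam₀ u)
    (hderiv : ∀ u ∈ Set.Icc c C, 0 < deriv lam₀ u) :
    ∃ M : ℝ, 0 < M ∧
      ∀ (δ : ℝ → ℝ), ContDiff ℝ 1 δ →
      ∀ (x₀ x₁ : ℝ → ℝ → ℝ) (V : Set (ℝ × ℝ)), IsOpen V →
        {p : ℝ × ℝ | 0 ≤ p.1 ∧ 0 ≤ p.2 ∧ c ≤ p.1 + p.2 ∧ p.1 + p.2 ≤ C} ⊆ V →
        ContDiffOn ℝ 2 (fun p : ℝ × ℝ => x₀ p.1 p.2) V →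
        ContDiffOn ℝ 2 (fun p : ℝ × ℝ => x₁ p.1 p.2) V →
        (∀ p ∈ V,
          2 * lam₀ (p.1 + p.2) * pd2 (pd1 x₀) p.1 p.2
            + deriv lam₀ (p.1 + p.2) * (pd1 x₀ p.1 p.2 + pd2 x₀ p.1 p.2) = 0) →
        (∀ p ∈ V,
          2 * lam₀ (p.1 + p.2) * pd2 (pd1 x₁) p.1 p.2
            + deriv lam₀ (p.1 + p.2) * (pd1 x₁ p.1 p.2 + pd2 x₁ p.1 p.2)
          = -(lam₀ (p.1 + p.2) * deriv δ (p.1 + p.2)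
              * (pd1 x₀ p.1 p.2 + pd2 x₀ p.1 p.2))) →
        (∀ s ∈ Set.Icc c C, x₁ s 0 = 0) →
        (∀ t ∈ Set.Icc c C, x₁ 0 t = 0) →
        (∀ s ∈ Set.Icc (0:ℝ) c, pd1 x₁ s (c - s) = 0 ∧ pd2 x₁ s (c - s) = 0) →
        sSup (energy lam₀ x₁ '' Set.Icc c C)
          ≤ M * sSup (energy lam₀ x₀ '' Set.Icc c C)
            * ∫ v in c..C, lam₀ v * (deriv δ v) ^ 2 :=
  linear_stability_estimate_general c C hc hcC lam₀ hlam₀ hpos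
end
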